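/- Let R be a commutative ring. The fully faithful functor 𝖳 : R-mod → Fun(Γ₊,R) admits a left adjoint 𝖰 : Fun(Γ₊,R) → R-mod, and the counit of the adjunction 𝖰(𝖳(M)) → M is an isomorphism for every R-module M. -/

import Mathlib

open CategoryTheory Limits

/-- `Γ₊`: the category of finite pointed sets. -/
abbrev GammaPlus : Type 1 := CategoryTheory.ObjectProperty.FullSubcategory (fun X : Pointed => Finite X.X)

/-- `[n]₊ ∈ Γ₊`: the pointed set with `n` non-basepoint elements and basepoint `o = none`. -/
def GammaPlus.of (n : ℕ) : GammaPlus := ⟨⟨Option (Fin n), none⟩, inferInstance⟩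

/-- The set of non-basepoint elements of a finite pointed set. -/
def GammaPlus.nb (S : GammaPlus) : Type := {s : S.obj.X // s ≠ S.obj.point}

variable (R : Type) [CommRing R]

open Classical in
/-- The linear map underlying the action of `𝖳(M)` on a pointed map `f : S ⟶ S'`:
the summand indexed by `s` is sent (identically) to the summand indexed by `f(s)`,
and to zero if `f(s) = o`. -/
noncomputable def spanTMapAux (M : ModuleCat R) {S S' : GammaPlus} (f : S ⟶ S') :
    (GammaPlus.nb S →₀ M) →ₗ[R] (GammaPlus.nb S' →₀ M) :=
  Finsupp.lsum R fun s =>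
    if h : f.hom.toFun s.1 ≠ S'.obj.point then Finsupp.lsingle (⟨f.hom.toFun s.1, h⟩ : GammaPlus.nb S')
    else 0

open Classical in
lemma spanTMapAux_single (M : ModuleCat R) {S S' : GammaPlus} (f : S ⟶ S') (s : GammaPlus.nb S)
    (m : M) :
    spanTMapAux R M f (Finsupp.single s m) =
      if h : f.hom.toFun s.1 ≠ S'.obj.point then Finsupp.single (⟨f.hom.toFun s.1, h⟩ : GammaPlus.nb S') m
      else 0 := by
  unfold spanTMapAux
  rw [Finsupp.lsum_single]
  split_ifs with h <;> rfl

lemma spanTMapAux_id (M : ModuleCat R) (S : GammaPlus) :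
    spanTMapAux R M (𝟙 S) = LinearMap.id := by
  apply Finsupp.lhom_ext
  intro s m
  rw [spanTMapAux_single, LinearMap.id_apply]
  split_ifs with h
  · rfl
  · exact absurd s.2 h

lemma spanTMapAux_comp (M : ModuleCat R) {S S' S'' : GammaPlus} (f : S ⟶ S') (g : S' ⟶ S'') :
    spanTMapAux R M (f ≫ g) = (spanTMapAux R M g).comp (spanTMapAux R M f) := by
  apply Finsupp.lhom_ext
  intro s m
  rw [LinearMap.comp_apply, spanTMapAux_single, spanTMapAux_single]
  by_cases h1 : f.hom.toFun s.1 ≠ S'.obj.point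
  · rw [dif_pos h1]
    refine Eq.trans ?_ (spanTMapAux_single R M g ⟨_, h1⟩ m).symm
    split_ifs with hA hB hB
    · rfl
    · exact absurd hA hB
    · exact absurd hB hA
    · rfl
  · rw [dif_neg h1]
    refine Eq.trans ?_ (map_zero (spanTMapAux R M g)).symm
    have hg : g.hom.toFun (f.hom.toFun s.1) = S''.obj.point := by
      rw [not_not.mp h1]; exact g.hom.map_point
    split_ifs with hA
    · exact absurd hg hA
    · rfl

lemma spanTMapAux_natural {M N : ModuleCat R} (φ : M ⟶ N) {S S' : GammaPlus} (f : S ⟶ S') :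
    (Finsupp.mapRange.linearMap (α := GammaPlus.nb S') φ.hom).comp (spanTMapAux R M f)
      = (spanTMapAux R N f).comp (Finsupp.mapRange.linearMap φ.hom) := by
  apply Finsupp.lhom_ext
  intro s m
  rw [LinearMap.comp_apply, LinearMap.comp_apply, spanTMapAux_single,
    Finsupp.mapRange.linearMap_apply]
  erw [Finsupp.mapRange.linearMap_apply,
    Finsupp.mapRange_single, spanTMapAux_single]
  by_cases h : f.hom.toFun s.1 ≠ S'.obj.point
  · rw [dif_pos h, dif_pos h]
    exact Finsupp.mapRange_single
  · rw [dif_neg h, dif_neg h]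
    exact Finsupp.mapRange_zero

/-- The functor `𝖳 : R-mod ⥤ Fun(Γ₊, R)`, with `𝖳(M)(S) = ⊕_{s ∈ S∖{o}} M`;
a pointed map `f` sends the summand indexed by `s` identically to the summand indexed
by `f(s)`, and to zero if `f(s) = o`. -/
noncomputable def spanT : ModuleCat R ⥤ (GammaPlus ⥤ ModuleCat R) where
  obj M :=
    { obj := fun S => ModuleCat.of R (GammaPlus.nb S →₀ M)
      map := fun f => ModuleCat.ofHom (spanTMapAux R M f)
      map_id := fun S => ModuleCat.hom_ext (spanTMapAux_id R M S)
      map_comp := fun f g => ModuleCat.hom_ext (spanTMapAux_comp R M f g) }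
  map {M N} φ :=
    { app := fun S => ModuleCat.ofHom (Finsupp.mapRange.linearMap φ.hom)
      naturality := fun {S S'} f => ModuleCat.hom_ext (spanTMapAux_natural R φ f) }
  map_id M := by
    ext S : 2
    exact ModuleCat.hom_ext Finsupp.mapRange.linearMap_id
  map_comp φ ψ := by
    ext S : 2
    exact ModuleCat.hom_ext (Finsupp.mapRange.linearMap_comp _ _)

/-- The reduced span functor `T ∈ Fun(Γ₊, R)`, `T(S) = ⊕_{s ∈ S∖{o}} R`. -/
noncomputable def reducedSpan : GammaPlus ⥤ ModuleCat R := (spanT R).obj (ModuleCat.of R R)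

/-!
A transformation `α : F ⟶ 𝖳(M)` is determined by one linear map `F([1]₊) → M`: for `s ≠ o` in
`S`, the collapse `δₛ : S ⟶ [1]₊` (sending `s` to `1` and everything else to `o`) gives by
naturality `α_S(y)ₛ = α_{[1]₊}(F(δₛ) y)₁`. Conversely, `x : F([1]₊) → M` extends to a
transformation exactly when it kills `F(g) y - ∑_{g(s) = 1} F(δₛ) y` for all `g : S ⟶ [1]₊`,
which is what naturality along `g` demands. Hence `𝖰(F)` is `F([1]₊)` modulo these relations.
For `F = 𝖳(M)` the projection `𝖳(M)([1]₊) → M` is already bijective, so the counit is an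
isomorphism, and a right adjoint with invertible counit is fully faithful.
-/

open Classical

lemma Submodule.bijective_liftQ {R M N : Type*} [Ring R] [AddCommGroup M] [Module R M]
    [AddCommGroup N] [Module R N] (p : Submodule R M) {f : M →ₗ[R] N} (hp : p ≤ LinearMap.ker f)
    (hf : Function.Bijective f) : Function.Bijective (p.liftQ f hp) :=
  ⟨LinearMap.ker_eq_bot.mp <| p.ker_liftQ_eq_bot f hp <| by
      rw [LinearMap.ker_eq_bot.mpr hf.1]; exact bot_le,
    fun n => let ⟨m, hm⟩ := hf.2 n; ⟨Submodule.Quotient.mk m, hm⟩⟩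

namespace GammaPlus

instance (S : GammaPlus) : Finite S.nb :=
  have : Finite S.obj.X := S.property
  Subtype.finite

noncomputable instance (S : GammaPlus) : Fintype S.nb :=
  Fintype.ofFinite _

def onePt : (of 1).nb :=
  ⟨some 0, Option.some_ne_none 0⟩

instance : Subsingleton (of 1).nb :=
  ⟨fun
    | ⟨none, h⟩, _ => absurd rfl h
    | _, ⟨none, h⟩ => absurd rfl h
    | ⟨some a, _⟩, ⟨some b, _⟩ => Subtype.ext (congrArg some (Subsingleton.elim a b))⟩

noncomputable def collapse {S : GammaPlus} (s : S.nb) : S ⟶ of 1 :=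
  ObjectProperty.homMk ⟨fun t => if t = s.1 then some 0 else none, if_neg fun h => s.2 h.symm⟩

lemma collapse_apply_eq_onePt_iff {S : GammaPlus} (s : S.nb) (t : S.obj.X) :
    (collapse s).hom.toFun t = onePt.1 ↔ t = s.1 := by
  show (if t = s.1 then some 0 else none) = some 0 ↔ _
  split_ifs <;> simp_all

lemma collapse_onePt : collapse onePt = 𝟙 (of 1) := by
  refine ObjectProperty.hom_ext _ (Pointed.Hom.ext (funext fun t => ?_))
  show (if t = some 0 then some 0 else none) = t
  rcases t with _ | a
  · simp
  · rw [Subsingleton.elim a 0]; exact if_pos rfl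

end GammaPlus

open GammaPlus

variable {R}

lemma spanTMapAux_apply (M : ModuleCat R) {S S' : GammaPlus} (f : S ⟶ S') (v : S.nb →₀ M)
    (s' : S'.nb) : spanTMapAux R M f v s' = ∑ s with f.hom.toFun s.1 = s'.1, v s := by
  induction v using Finsupp.induction_linear with
  | zero => simp
  | add u w hu hw => simp [hu, hw, Finset.sum_add_distrib]
  | single t m =>
    rw [spanTMapAux_single]
    simp only [Finsupp.single_apply, Finset.sum_ite_eq, Finset.mem_filter, Finset.mem_univ,
      true_and]
    by_cases h : f.hom.toFun t.1 = S'.obj.point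
    · rw [dif_neg (not_not.mpr h), if_neg (by rw [h]; exact s'.2.symm)]
      rfl
    · rw [dif_pos h]
      exact Finsupp.single_apply.trans (if_congr Subtype.ext_iff rfl rfl)

lemma spanTMapAux_collapse_apply_onePt (M : ModuleCat R) {S : GammaPlus} (s : S.nb)
    (v : S.nb →₀ M) : spanTMapAux R M (collapse s) v onePt = v s := by
  rw [spanTMapAux_apply, Finset.sum_eq_single_of_mem s]
  · simp [collapse_apply_eq_onePt_iff]
  · intro t ht hts
    simp only [Finset.mem_filter, Finset.mem_univ, true_and, collapse_apply_eq_onePt_iff] at ht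
    exact absurd (Subtype.ext ht) hts

section Transformations

variable {F : GammaPlus ⥤ ModuleCat R} {M : ModuleCat R}

variable (F) in
noncomputable def collapseRelations : Submodule R (F.obj (of 1)) :=
  Submodule.span R {z | ∃ (S : GammaPlus) (g : S ⟶ of 1) (y : F.obj S),
    z = F.map g y - ∑ s with g.hom.toFun s.1 = onePt.1, F.map (collapse s) y}

lemma apply_map_eq_sum_collapse_of_le_ker {x : F.obj (of 1) →ₗ[R] M}
    (hx : collapseRelations F ≤ LinearMap.ker x) {S : GammaPlus} (g : S ⟶ of 1) (y : F.obj S) :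
    x (F.map g y) = ∑ s with g.hom.toFun s.1 = onePt.1, x (F.map (collapse s) y) := by
  have h := hx (Submodule.subset_span ⟨S, g, y, rfl⟩)
  rwa [LinearMap.mem_ker, map_sub, map_sum, sub_eq_zero] at h

-- `α.app S`, retyped so that its values can be evaluated at the points of `S.nb`
noncomputable def spanTApp (α : F ⟶ (spanT R).obj M) (S : GammaPlus) :
    F.obj S →ₗ[R] (S.nb →₀ M) :=
  (α.app S).hom

lemma spanTApp_naturality (α : F ⟶ (spanT R).obj M) {S S' : GammaPlus} (f : S ⟶ S')
    (y : F.obj S) : spanTApp α S' (F.map f y) = spanTMapAux R M f (spanTApp α S y) :=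
  ConcreteCategory.congr_hom (α.naturality f) y

lemma spanTApp_apply (α : F ⟶ (spanT R).obj M) {S : GammaPlus} (y : F.obj S) (s : S.nb) :
    spanTApp α S y s = spanTApp α (of 1) (F.map (collapse s) y) onePt := by
  rw [spanTApp_naturality, spanTMapAux_collapse_apply_onePt]

lemma spanTApp_injective : Function.Injective (spanTApp (F := F) (M := M)) :=
  fun _ _ h => NatTrans.ext (funext fun S => ModuleCat.hom_ext (congrFun h S))

lemma collapseRelations_le_ker_spanTApp (α : F ⟶ (spanT R).obj M) :
    collapseRelations F ≤ LinearMap.ker (Finsupp.lapply onePt ∘ₗ spanTApp α (of 1)) := by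
  rw [collapseRelations, Submodule.span_le]
  rintro _ ⟨S, g, y, rfl⟩
  rw [SetLike.mem_coe, LinearMap.mem_ker, map_sub, map_sum, sub_eq_zero, LinearMap.comp_apply,
    Finsupp.lapply_apply, spanTApp_naturality, spanTMapAux_apply]
  exact Finset.sum_congr rfl fun s _ => spanTApp_apply α y s

noncomputable def collapseCoords (x : F.obj (of 1) →ₗ[R] M) (S : GammaPlus) :
    F.obj S →ₗ[R] (S.nb →₀ M) :=
  (Finsupp.linearEquivFunOnFinite R M S.nb).symm.toLinearMap ∘ₗ
    LinearMap.pi fun s => x ∘ₗ (F.map (collapse s)).hom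

lemma collapseCoords_apply (x : F.obj (of 1) →ₗ[R] M) {S : GammaPlus} (y : F.obj S)
    (s : S.nb) : collapseCoords x S y s = x (F.map (collapse s) y) :=
  rfl

lemma collapseCoords_naturality {x : F.obj (of 1) →ₗ[R] M}
    (hx : collapseRelations F ≤ LinearMap.ker x) {S S' : GammaPlus} (f : S ⟶ S')
    (y : F.obj S) : collapseCoords x S' (F.map f y) = spanTMapAux R M f (collapseCoords x S y) := by
  ext s'
  rw [collapseCoords_apply, spanTMapAux_apply, ← ConcreteCategory.comp_apply, ← F.map_comp,
    apply_map_eq_sum_collapse_of_le_ker hx]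
  exact Finset.sum_congr (Finset.filter_congr fun t _ => collapse_apply_eq_onePt_iff s' _)
    fun _ _ => rfl

noncomputable def spanTLift {x : F.obj (of 1) →ₗ[R] M}
    (hx : collapseRelations F ≤ LinearMap.ker x) : F ⟶ (spanT R).obj M where
  app S := ModuleCat.ofHom (collapseCoords x S)
  naturality _ _ f := ModuleCat.hom_ext (LinearMap.ext (collapseCoords_naturality hx f))

end Transformations

variable (R) in
noncomputable def spanTHomEquiv (F : GammaPlus ⥤ ModuleCat R) (M : ModuleCat R) :
    (ModuleCat.of R (F.obj (of 1) ⧸ collapseRelations F) ⟶ M) ≃ (F ⟶ (spanT R).obj M) where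
  toFun φ := spanTLift (x := φ.hom ∘ₗ (collapseRelations F).mkQ) fun z hz => by
    simp [(Submodule.Quotient.mk_eq_zero _).2 hz]
  invFun α := ModuleCat.ofHom <|
    (collapseRelations F).liftQ (Finsupp.lapply onePt ∘ₗ spanTApp α (of 1))
      (collapseRelations_le_ker_spanTApp α)
  left_inv φ := by
    ext y : 3
    change φ (Submodule.Quotient.mk (F.map (collapse onePt) y)) = φ (Submodule.Quotient.mk y)
    rw [collapse_onePt, F.map_id]
    rfl
  right_inv α := spanTApp_injective <| funext fun S => LinearMap.ext fun y =>
    Finsupp.ext fun s => (spanTApp_apply α y s).symm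

lemma spanTHomEquiv_comp {F : GammaPlus ⥤ ModuleCat R} {M M' : ModuleCat R}
    (φ : ModuleCat.of R (F.obj (of 1) ⧸ collapseRelations F) ⟶ M) (g : M ⟶ M') :
    spanTHomEquiv R F M' (φ ≫ g) = spanTHomEquiv R F M φ ≫ (spanT R).map g :=
  spanTApp_injective <| funext fun _ => LinearMap.ext fun _ => Finsupp.ext fun _ => rfl

variable (R) in
noncomputable def spanTLeftAdjoint : (GammaPlus ⥤ ModuleCat R) ⥤ ModuleCat R :=
  Adjunction.leftAdjointOfEquiv (spanTHomEquiv R) fun _ _ _ g φ => spanTHomEquiv_comp φ g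

variable (R) in
noncomputable def spanTAdjunction : spanTLeftAdjoint R ⊣ spanT R :=
  Adjunction.adjunctionOfEquivLeft (spanTHomEquiv R) fun _ _ _ g φ => spanTHomEquiv_comp φ g

instance isIso_spanTAdjunction_counit_app (M : ModuleCat R) :
    IsIso ((spanTAdjunction R).counit.app M) := by
  rw [ConcreteCategory.isIso_iff_bijective]
  exact Submodule.bijective_liftQ _ _ (Finsupp.uniqueLinearEquiv R M onePt).bijective

variable (R) in
noncomputable def spanTFullyFaithful : (spanT R).FullyFaithful :=
  have := NatIso.isIso_of_isIso_app (spanTAdjunction R).counit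
  (spanTAdjunction R).fullyFaithfulROfIsIsoCounit

/-- The fully faithful functor `𝖳 : R-mod ⥤ Fun(Γ₊, R)` admits a left adjoint
`𝖰 : Fun(Γ₊, R) ⥤ R-mod`, and the counit `𝖰(𝖳(M)) ⟶ M` of the adjunction is an
isomorphism for every `R`-module `M`. -/
theorem spanT_has_left_adjoint_counit_iso (R : Type) [CommRing R] :
    (spanT R).Full ∧ (spanT R).Faithful ∧
    ∃ (Q : (GammaPlus ⥤ ModuleCat R) ⥤ ModuleCat R) (adj : Q ⊣ spanT R),
      ∀ M : ModuleCat R, IsIso (adj.counit.app M) :=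
  ⟨(spanTFullyFaithful R).full, (spanTFullyFaithful R).faithful, _, spanTAdjunction R,
    isIso_spanTAdjunction_counit_app⟩
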